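/- arXiv:2305.03619 — 2 statements merged into one kernel-verified Lean document; each statement's English description precedes it below -/
import Mathlib

section
/- Consider the semi-discrete Fisher-Kolmogorov system c_j'(t) = -Σ_i L_{ji} c_i(t) + α_j c_j(t)(1 - c_j(t)) on a finite graph with Laplacian L (nonnegative weights) and α_j ≥ 0. If the initial data satisfies 0 ≤ c_j(0) ≤ 1 for all j, then 0 ≤ c_j(t) ≤ 1 for all t ≥ 0 and all j. -/
/-!
Let `V(t) = ∑ⱼ dist(cⱼ(t), [0,1])²`. With `gⱼ = cⱼ - proj_[0,1] cⱼ`, `V` is differentiable with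
`V' = 2 ∑ⱼ gⱼ cⱼ'`. Since the projection onto `[0,1]` is monotone, `2 g(x) (y - x) ≤ g(y)²`, so
the diffusion term contributes at most a multiple of `V`; the logistic term satisfies
`g(x) x (1 - x) ≤ (1 - x) g(x)²`, which is a multiple of `V` once `c` is bounded on `[0, t]`.
Hence `V' ≤ K V` on `[0, t]` with `V(0) = 0`, and Grönwall's inequality forces `V = 0`.
-/

open Finset Set Asymptotics

theorem hasDerivAt_of_norm_sub_le_mul_sq {𝕜 F : Type*} [NontriviallyNormedField 𝕜]
    [NormedAddCommGroup F] [NormedSpace 𝕜 F] {f : 𝕜 → F} {f' : F} {x : 𝕜} {C : ℝ}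
    (h : ∀ y, ‖f y - f x - (y - x) • f'‖ ≤ C * ‖y - x‖ ^ 2) : HasDerivAt f f' x :=
  .of_isLittleO ((IsBigO.of_bound C (.of_forall fun y => by simpa using h y)).trans_isLittleO
    (isLittleO_pow_sub_sub x one_lt_two))

/-- `overshoot x ^ 2` is the squared distance from `x` to `[0, 1]`. -/
noncomputable def overshoot (x : ℝ) : ℝ := x - max 0 (min x 1)

theorem overshoot_eq_zero_iff {x : ℝ} : overshoot x = 0 ↔ 0 ≤ x ∧ x ≤ 1 := by
  unfold overshoot
  grind

theorem abs_overshoot_sq_sub_le (x y : ℝ) :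
    |overshoot y ^ 2 - overshoot x ^ 2 - 2 * overshoot x * (y - x)| ≤ (y - x) ^ 2 := by
  unfold overshoot
  rw [abs_le]
  rcases le_total x 0 with hx | hx <;> rcases le_total x 1 with hx' | hx' <;>
  rcases le_total y 0 with hy | hy <;> rcases le_total y 1 with hy' | hy' <;>
  simp only [min_eq_left, min_eq_right, max_eq_left, max_eq_right, zero_le_one, *] <;>
  constructor <;> nlinarith [sq_nonneg (y - x), sq_nonneg x, sq_nonneg (x - 1)]

theorem hasDerivAt_overshoot_sq (x : ℝ) :
    HasDerivAt (fun x => overshoot x ^ 2) (2 * overshoot x) x :=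
  hasDerivAt_of_norm_sub_le_mul_sq (C := 1) fun y => by
    simpa [smul_eq_mul, mul_comm] using abs_overshoot_sq_sub_le x y

theorem two_mul_overshoot_mul_sub_le (x y : ℝ) :
    2 * overshoot x * (y - x) ≤ overshoot y ^ 2 := by
  unfold overshoot
  rcases le_total x 0 with hx | hx <;> rcases le_total x 1 with hx' | hx' <;>
  rcases le_total y 0 with hy | hy <;> rcases le_total y 1 with hy' | hy' <;>
  simp only [min_eq_left, min_eq_right, max_eq_left, max_eq_right, zero_le_one, *] <;>
  nlinarith [sq_nonneg (y - x), sq_nonneg x, sq_nonneg (x - 1)]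

theorem overshoot_mul_logistic_le (x : ℝ) :
    overshoot x * (x * (1 - x)) ≤ (1 - x) * overshoot x ^ 2 := by
  unfold overshoot
  rcases le_total x 0 with hx | hx <;> rcases le_total x 1 with hx' | hx' <;>
  simp only [min_eq_left, min_eq_right, max_eq_left, max_eq_right, zero_le_one, *] <;>
  nlinarith

theorem nonpos_of_deriv_right_le_mul_self {f f' : ℝ → ℝ} {K a b : ℝ}
    (hf : ContinuousOn f (Icc a b)) (hf' : ∀ x ∈ Ico a b, HasDerivWithinAt f (f' x) (Ici x) x)
    (ha : f a ≤ 0) (bound : ∀ x ∈ Ico a b, f' x ≤ K * f x) : ∀ x ∈ Icc a b, f x ≤ 0 := by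
  intro x hx
  simpa only [gronwallBound_ε0_δ0, sub_nonneg] using le_gronwallBound_of_liminf_deriv_right_le
    (ε := 0) hf (fun x hx _ hr => (hf' x hx).liminf_right_slope_le hr) ha
    (fun x hx => (bound x hx).trans_eq (add_zero _).symm) x hx

theorem neg_sum_laplacian_mul {ι : Type*} [Fintype ι] [DecidableEq ι] {w L : ι → ι → ℝ}
    (hL : ∀ j i, L j i = if j = i then ∑ k ∈ univ.filter (· ≠ j), w j k else -w j i)
    (x : ι → ℝ) (j : ι) : -(∑ i, L j i * x i) = ∑ i, w j i * (x i - x j) := by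
  rw [← add_sum_erase _ _ (mem_univ j), ← add_sum_erase _ _ (mem_univ j), hL, if_pos rfl,
    filter_ne' univ j, sub_self, mul_zero, zero_add, sum_mul, ← sum_add_distrib, ← sum_neg_distrib]
  refine sum_congr rfl fun i hi => ?_
  rw [hL, if_neg (ne_of_mem_erase hi).symm]
  ring

def fkField {ι : Type*} [Fintype ι] (w : ι → ι → ℝ) (α : ι → ℝ) (x : ι → ℝ) (j : ι) : ℝ :=
  ∑ i, w j i * (x i - x j) + α j * x j * (1 - x j)

theorem sum_two_mul_overshoot_mul_fkField_le {ι : Type*} [Fintype ι] {w : ι → ι → ℝ}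
    {α : ι → ℝ} (hw : ∀ i j, 0 ≤ w i j) (hα : ∀ j, 0 ≤ α j) {x : ι → ℝ} {B : ℝ}
    (hB : ∀ j, |x j| ≤ B) :
    ∑ j, 2 * overshoot (x j) * fkField w α x j ≤
      (∑ j, ∑ i, w j i + 2 * (1 + B) * ∑ j, α j) * ∑ j, overshoot (x j) ^ 2 := by
  set V := ∑ j, overshoot (x j) ^ 2
  have hV : ∀ i, overshoot (x i) ^ 2 ≤ V := fun i =>
    single_le_sum (f := fun j => overshoot (x j) ^ 2) (fun j _ => sq_nonneg _) (mem_univ i)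
  have hj : ∀ j, 2 * overshoot (x j) * fkField w α x j ≤
      (∑ i, w j i) * V + 2 * (1 + B) * (α j * V) := by
    intro j
    have hdiff : 2 * overshoot (x j) * ∑ i, w j i * (x i - x j) ≤ (∑ i, w j i) * V := by
      rw [mul_sum, sum_mul]
      refine sum_le_sum fun i _ => ?_
      calc 2 * overshoot (x j) * (w j i * (x i - x j))
          = w j i * (2 * overshoot (x j) * (x i - x j)) := by ring
        _ ≤ w j i * V :=
          mul_le_mul_of_nonneg_left ((two_mul_overshoot_mul_sub_le _ _).trans (hV i)) (hw j i)
    have hαj : 0 ≤ 2 * α j := by linarith [hα j]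
    have hxB : 1 - x j ≤ 1 + B := by linarith [neg_le_abs (x j), hB j]
    have hB0 : 0 ≤ 1 + B := by linarith [abs_nonneg (x j), hB j]
    have hreact : 2 * overshoot (x j) * (α j * x j * (1 - x j)) ≤ 2 * (1 + B) * (α j * V) := by
      calc 2 * overshoot (x j) * (α j * x j * (1 - x j))
          = 2 * α j * (overshoot (x j) * (x j * (1 - x j))) := by ring
        _ ≤ 2 * α j * ((1 - x j) * overshoot (x j) ^ 2) :=
          mul_le_mul_of_nonneg_left (overshoot_mul_logistic_le _) hαj
        _ ≤ 2 * α j * ((1 + B) * V) :=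
          mul_le_mul_of_nonneg_left (mul_le_mul hxB (hV j) (sq_nonneg _) hB0) hαj
        _ = 2 * (1 + B) * (α j * V) := by ring
    rw [fkField, mul_add]
    exact add_le_add hdiff hreact
  calc ∑ j, 2 * overshoot (x j) * fkField w α x j
      ≤ ∑ j, ((∑ i, w j i) * V + 2 * (1 + B) * (α j * V)) := sum_le_sum fun j _ => hj j
    _ = (∑ j, ∑ i, w j i + 2 * (1 + B) * ∑ j, α j) * V := by
      rw [sum_add_distrib, ← sum_mul, ← mul_sum, ← sum_mul]
      ring

open Finset in
theorem semidiscrete_FK_invariant_general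
    (M : ℕ) (w : Fin M → Fin M → ℝ)
    (hnonneg : ∀ i j, 0 ≤ w i j)
    (L : Fin M → Fin M → ℝ)
    (hL : ∀ j i, L j i = if j = i then ∑ k ∈ univ.filter (· ≠ j), w j k else -w j i)
    (α : Fin M → ℝ) (hα : ∀ j, 0 ≤ α j)
    (c : ℝ → Fin M → ℝ)
    (hode : ∀ j, ∀ t : ℝ, 0 ≤ t →
      HasDerivAt (fun s => c s j)
        (-(∑ i, L j i * c t i) + α j * c t j * (1 - c t j)) t)
    (hinit : ∀ j, 0 ≤ c 0 j ∧ c 0 j ≤ 1) :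
    ∀ t : ℝ, 0 ≤ t → ∀ j, 0 ≤ c t j ∧ c t j ≤ 1 := by
  intro t ht
  have hc : ∀ j, ∀ s, 0 ≤ s → HasDerivAt (fun s => c s j) (fkField w α (c s) j) s := by
    intro j s hs
    simpa only [fkField, neg_sum_laplacian_mul hL, add_assoc] using hode j s hs
  obtain ⟨B, hB⟩ := isCompact_Icc.exists_bound_of_continuousOn (continuousOn_pi.2
    fun j s hs => (hc j s hs.1).continuousAt.continuousWithinAt : ContinuousOn c (Icc 0 t))
  set V := fun s => ∑ j, overshoot (c s j) ^ 2
  have hV : ∀ s, 0 ≤ s →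
      HasDerivAt V (∑ j, 2 * overshoot (c s j) * fkField w α (c s) j) s := fun s hs =>
    HasDerivAt.fun_sum fun j _ => (hasDerivAt_overshoot_sq _).comp s (hc j s hs)
  have hVt : V t ≤ 0 := nonpos_of_deriv_right_le_mul_self
    (fun s hs => (hV s hs.1).continuousAt.continuousWithinAt)
    (fun s hs => (hV s hs.1).hasDerivWithinAt)
    (by simp [V, overshoot_eq_zero_iff.2 (hinit _)])
    (fun s hs => sum_two_mul_overshoot_mul_fkField_le hnonneg hα fun j =>
      (norm_le_pi_norm (c s) j).trans (hB s (Ico_subset_Icc_self hs)))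
    t ⟨ht, le_rfl⟩
  intro j
  refine overshoot_eq_zero_iff.1 ((pow_eq_zero_iff two_ne_zero).1 (le_antisymm ?_ (sq_nonneg _)))
  exact (single_le_sum (fun i _ => sq_nonneg (overshoot (c t i))) (mem_univ j)).trans hVt

open Finset in
/-- Invariance of `[0,1]^M` for the semi-discrete Fisher-Kolmogorov system on a graph. -/
theorem semidiscrete_FK_invariant
    (M : ℕ) (w : Fin M → Fin M → ℝ)
    (hsymm : ∀ i j, w i j = w j i) (hnonneg : ∀ i j, 0 ≤ w i j)
    (L : Fin M → Fin M → ℝ)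
    (hL : ∀ j i, L j i = if j = i then ∑ k ∈ univ.filter (· ≠ j), w j k else -w j i)
    (α : Fin M → ℝ) (hα : ∀ j, 0 ≤ α j)
    (c : ℝ → Fin M → ℝ)
    (hode : ∀ j, ∀ t : ℝ, 0 ≤ t →
      HasDerivAt (fun s => c s j)
        (-(∑ i, L j i * c t i) + α j * c t j * (1 - c t j)) t)
    (hinit : ∀ j, 0 ≤ c 0 j ∧ c 0 j ≤ 1) :
    ∀ t : ℝ, 0 ≤ t → ∀ j, 0 ≤ c t j ∧ c t j ≤ 1 :=
  semidiscrete_FK_invariant_general M w hnonneg L hL α hα c hode hinit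
end

section
/- The combination technique coefficients of a Smolyak sparse grid sum to one: for any finite downward-closed multi-index set I ⊂ ℕ₊^N containing the vector (1,...,1), Σ_{i ∈ I} γ_i = 1, where γ_i = Σ_{j ∈ {0,1}^N, i+j ∈ I} (-1)^{|j|}. -/
open Finset

/-- `|j|` for `j ∈ {0,1}^N` encoded as a Boolean vector: the number of ones. -/
def boolWeight {N : ℕ} (j : Fin N → Bool) : ℕ :=
  (univ.filter fun n => j n = true).card

/-- `i + j` for a multi-index `i` and `j ∈ {0,1}^N`. -/
def addBool {N : ℕ} (i : Fin N → ℕ) (j : Fin N → Bool) : Fin N → ℕ :=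
  fun n => i n + (if j n then 1 else 0)

/-- Combination technique coefficient `γ_i = ∑_{j ∈ {0,1}^N, i+j ∈ I} (-1)^{|j|}`. -/
def combCoeff {N : ℕ} (I : Finset (Fin N → ℕ)) (i : Fin N → ℕ) : ℤ :=
  ∑ j : Fin N → Bool, if addBool i j ∈ I then (-1 : ℤ) ^ boolWeight j else 0

/-- Subtracting 1 in any set of coordinates (where the entry is ≥ 2) stays in `I`. -/
lemma sub_set_mem {N : ℕ} (I : Finset (Fin N → ℕ))
    (hpos : ∀ i ∈ I, ∀ n, 1 ≤ i n)
    (hdc : ∀ i ∈ I, ∀ n : Fin N, (∀ k, 1 ≤ i k - if k = n then 1 else 0) →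
      (fun k => i k - if k = n then 1 else 0) ∈ I)
    (s : Finset (Fin N)) :
    ∀ k ∈ I, (∀ n ∈ s, 2 ≤ k n) → (fun n => k n - if n ∈ s then 1 else 0) ∈ I := by
  induction s using Finset.induction_on with
  | empty => intro k hk _; simpa using hk
  | @insert a s ha ih =>
    intro k hk h2
    have hk' : (fun m => k m - if m = a then 1 else 0) ∈ I := by
      refine hdc k hk a (fun m => ?_)
      by_cases hm : m = a
      · subst hm
        have := h2 m (mem_insert_self _ _)
        simp; omega
      · simp [hm]; exact hpos k hk m
    have hres := ih _ hk' (fun n hn => by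
      have hna : n ≠ a := fun h => ha (h ▸ hn)
      simpa [hna] using h2 n (mem_insert_of_mem hn))
    convert hres using 1
    funext n
    by_cases hna : n = a
    · subst hna; simp [ha]
    · by_cases hns : n ∈ s <;> simp [hna, hns]

/-- The combination technique coefficients of a Smolyak sparse grid built on a
downward-closed multi-index set containing `(1,…,1)` sum to one. -/
theorem smolyak_coefficients_sum_to_one
    (N : ℕ) (I : Finset (Fin N → ℕ))
    (hpos : ∀ i ∈ I, ∀ n, 1 ≤ i n)
    (hone : (fun _ : Fin N => 1) ∈ I)
    (hdc : ∀ i ∈ I, ∀ n : Fin N, (∀ k, 1 ≤ i k - if k = n then 1 else 0) →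
      (fun k => i k - if k = n then 1 else 0) ∈ I) :
    ∑ i ∈ I, combCoeff I i = 1 := by
  have h1 : ∑ i ∈ I, combCoeff I i
      = ∑ p ∈ (I ×ˢ (univ : Finset (Fin N → Bool))).filter
          (fun p => addBool p.1 p.2 ∈ I), (-1 : ℤ) ^ boolWeight p.2 := by
    rw [Finset.sum_filter, Finset.sum_product]
    rfl
  have h2 : ∑ p ∈ (I ×ˢ (univ : Finset (Fin N → Bool))).filter
          (fun p => addBool p.1 p.2 ∈ I), (-1 : ℤ) ^ boolWeight p.2
      = ∑ p ∈ (I ×ˢ (univ : Finset (Fin N → Bool))).filter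
          (fun p => ∀ n, p.2 n = true → 2 ≤ p.1 n), (-1 : ℤ) ^ boolWeight p.2 := by
    refine Finset.sum_nbij' (i := fun p => (addBool p.1 p.2, p.2))
      (j := fun p => ((fun n => p.1 n - if p.2 n then 1 else 0), p.2))
      ?_ ?_ ?_ ?_ ?_
    · rintro ⟨i, j⟩ hp
      simp only [mem_filter, mem_product, mem_univ, and_true] at hp ⊢
      refine ⟨hp.2, fun n hn => ?_⟩
      have := hpos i hp.1 n
      simp [addBool, hn]; omega
    · rintro ⟨k, j⟩ hp
      simp only [mem_filter, mem_product, mem_univ, and_true] at hp ⊢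
      obtain ⟨hk, hj⟩ := hp
      constructor
      · have := sub_set_mem I hpos hdc (univ.filter fun n => j n = true) k hk
          (fun n hn => hj n (by simpa using hn))
        have heq : (fun n => k n - if j n then 1 else 0)
            = fun n => k n - if n ∈ (univ.filter fun n => j n = true) then 1 else 0 := by
          funext n; by_cases h : j n <;> simp [h]
        rw [heq]; exact this
      · have : addBool (fun n => k n - if j n then 1 else 0) j = k := by
          funext n
          by_cases h : j n
          · have := hj n h
            simp [addBool, h]; omega
          · simp [addBool, h]
        rw [this]; exact hk
    · rintro ⟨i, j⟩ _
      simp only [Prod.mk.injEq, and_true]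
      funext n
      by_cases h : j n <;> simp [addBool, h]
    · rintro ⟨k, j⟩ hp
      simp only [mem_filter, mem_product, mem_univ, and_true] at hp
      simp only [Prod.mk.injEq, and_true]
      funext n
      by_cases h : j n
      · have := hp.2 n h
        simp [addBool, h]; omega
      · simp [addBool, h]
    · rintro ⟨i, j⟩ _; rfl
  have key : ∀ k : Fin N → ℕ,
      (∑ j : Fin N → Bool, if (∀ n, j n = true → 2 ≤ k n)
          then (-1 : ℤ) ^ boolWeight j else 0)
      = ∏ n, (if 2 ≤ k n then (0 : ℤ) else 1) := by
    intro k
    have step : ∀ j : Fin N → Bool,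
        (if (∀ n, j n = true → 2 ≤ k n) then (-1 : ℤ) ^ boolWeight j else 0)
        = ∏ n, (if j n then (if 2 ≤ k n then (-1 : ℤ) else 0) else 1) := by
      intro j
      by_cases h : ∀ n, j n = true → 2 ≤ k n
      · rw [if_pos h]
        have : ∀ n, (if j n then (if 2 ≤ k n then (-1 : ℤ) else 0) else 1)
            = if j n = true then (-1 : ℤ) else 1 := by
          intro n
          by_cases hn : j n
          · simp [hn, h n (by simpa using hn)]
          · simp [hn]
        rw [Finset.prod_congr rfl (fun n _ => this n)]
        rw [Finset.prod_ite, Finset.prod_const, Finset.prod_const, one_pow, mul_one]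
        rfl
      · rw [if_neg h]
        push_neg at h
        obtain ⟨n, hn1, hn2⟩ := h
        exact (Finset.prod_eq_zero (mem_univ n) (by simp [hn1, hn2])).symm
    rw [Finset.sum_congr rfl (fun j _ => step j)]
    have := Finset.prod_univ_sum (fun _ : Fin N => (univ : Finset Bool))
      (fun n b => if b then (if 2 ≤ k n then (-1 : ℤ) else 0) else 1)
    rw [Fintype.piFinset_univ] at this
    rw [← this]
    refine Finset.prod_congr rfl (fun n _ => ?_)
    by_cases h : 2 ≤ k n <;> simp [h, Fintype.sum_bool]
  have h3 : ∑ p ∈ (I ×ˢ (univ : Finset (Fin N → Bool))).filter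
          (fun p => ∀ n, p.2 n = true → 2 ≤ p.1 n), (-1 : ℤ) ^ boolWeight p.2
      = ∑ k ∈ I, if k = (fun _ : Fin N => 1) then (1 : ℤ) else 0 := by
    rw [Finset.sum_filter, Finset.sum_product]
    refine Finset.sum_congr rfl (fun k hk => ?_)
    rw [key k]
    by_cases h : k = (fun _ : Fin N => 1)
    · subst h
      simp
    · rw [if_neg h]
      have : ∃ n, k n ≠ 1 := by
        by_contra hc
        push_neg at hc
        exact h (funext hc)
      obtain ⟨n, hn⟩ := this
      have := hpos k hk n
      exact Finset.prod_eq_zero (mem_univ n) (by simp; omega)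
  rw [h1, h2, h3, Finset.sum_ite_eq' I (fun _ : Fin N => 1) (fun _ => (1 : ℤ))]
  simp [hone]
end
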